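/- arXiv:2406.03960 — 2 statements merged into one kernel-verified Lean document; each statement's English description precedes it below -/
import Mathlib

section
/- Let n and m be nonzero integers which are isocratic but not coprime, let p be a prime dividing n·m, and let q be a prime dividing gcd(n,m) (possibly q = p). Then there exists a representation ρ of BS(n,m) on the 𝔽_p-vector space (Fin q → ZMod p) ≅ 𝔽_p^q such that the second group cohomology H²(BS(n,m), ρ) is nontrivial. -/
/-- The single relator `a^n t a^{-m} t⁻¹` of the Baumslag–Solitar group `BS(n,m)`,
with generator `0 = a` and `1 = t`. -/
def BSRel (n m : ℤ) : Set (FreeGroup (Fin 2)) :=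
  {FreeGroup.of 0 ^ n * FreeGroup.of 1 * FreeGroup.of 0 ^ (-m) * (FreeGroup.of 1)⁻¹}

/-- The Baumslag–Solitar group `BS(n,m) = ⟨a, t ∣ a^n = t a^m t⁻¹⟩`. -/
abbrev BS (n m : ℤ) := PresentedGroup (BSRel n m)

/-- The first generator `a` of `BS(n,m)`. -/
abbrev BS.a (n m : ℤ) : BS n m := PresentedGroup.of 0

/-- Two integers are *isocratic* if every prime dividing both divides them with the same
`p`-adic valuation. -/
def Isocratic (a b : ℤ) : Prop :=
  ∀ p : ℕ, p.Prime → (p : ℤ) ∣ a → (p : ℤ) ∣ b →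
    padicValNat p a.natAbs = padicValNat p b.natAbs

/-!
Let `M` be a representation of `BS(n,m)` on which `t` and `a^q` act trivially, for some `q`
dividing `n` and `m`, and let `e ∈ M` be moved by `a`. Let `BS(n,m)` act on `ℚ` by
`a : x ↦ x + 1`, `t : x ↦ (n/m) x`, and so on `V = (ℚ → M)`, which contains `M` as the constant
functions. The class of `τ = (x ↦ ⌊x/n⌋ • e)` in `V/M` is fixed by `a^n`, so there is a
1-cocycle `θ` of `V/M` with `θ a = 0` and `θ t = [τ]`. If `H²(BS(n,m), M)` vanished, `θ` would lift
to a 1-cocycle `c` of `V`, with `c a = v₁` and `c t = τ + w` for constants `v₁, w`. Writing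
`n = q n₀`, `m = q m₀`, and `v` for the constant `c (a^q)`, the cocycle identity evaluated on
`a^n t = t a^m` reads `-e + n₀ v = m₀ v`, while `c (a · a^q) = c (a^q · a)` shows that `a`
fixes `v`; so `a` would fix `e`. For the theorem, `M = 𝔽_p^q` with `a` rotating the coordinates
and `e` a basis vector.
-/

universe u

open groupCohomology

section Lifting

variable {k G M V : Type u} [CommRing k] [Group G] [AddCommGroup M] [Module k M]
  [AddCommGroup V] [Module k V] {ρM : Representation k G M} {ρV : Representation k G V}
  {ι : M →ₗ[k] V}

/- The defect of `σ` is a 2-cocycle of `M`; a primitive `x` of it corrects `σ` to a cocycle. -/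
theorem exists_sub_mem_cocycles₁_of_subsingleton_H2 [Subsingleton (H2 (Rep.of ρM))]
    (hι : Function.Injective ι) (hιρ : ∀ g v, ι (ρM g v) = ρV g (ι v))
    (σ : G → V) (hσ : ∀ g h, ρV g (σ h) - σ (g * h) + σ g ∈ LinearMap.range ι) :
    ∃ x : G → M, (fun g => σ g - ι (x g)) ∈ cocycles₁ (Rep.of ρV) := by
  choose f hf using hσ
  have hf₂ : (fun gh : G × G => f gh.1 gh.2) ∈ cocycles₂ (Rep.of ρM) := by
    refine (mem_cocycles₂_def _).2 fun g h j => hι ?_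
    simp only [map_sub, map_add, map_zero, hιρ, hf, map_mul, Module.End.mul_apply, mul_assoc]
    abel
  obtain ⟨x, hx⟩ : (fun gh : G × G => f gh.1 gh.2) ∈ coboundaries₂ (Rep.of ρM) :=
    (H2π_eq_zero_iff ⟨_, hf₂⟩).1 (Subsingleton.elim _ _)
  refine ⟨x, (mem_cocycles₁_iff _).2 fun g h => ?_⟩
  have hxgh := congrArg ι (congrFun hx (g, h))
  simp only [d₁₂_hom_apply, map_add, map_sub, hιρ, hf] at hxgh
  simp only [map_sub]
  linear_combination (norm := module) hxgh

end Lifting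

section Cocycles

variable {k G : Type u} [CommRing k] [Group G] {A : Rep k G}

theorem cocycles₁_map_pow_mem (c : cocycles₁ A) {N : Submodule k A}
    (hN : ∀ g, N ≤ N.comap (A.ρ g)) {g : G} (hg : c g ∈ N) (j : ℕ) : c (g ^ j) ∈ N := by
  induction j with
  | zero => simp
  | succ j ih =>
    rw [pow_succ, (mem_cocycles₁_iff c).1 c.2]
    exact N.add_mem (hN _ hg) ih

theorem cocycles₁_map_zpow_of_fixed (c : cocycles₁ A) {g : G} (hg : A.ρ g (c g) = c g) (j : ℤ) :
    c (g ^ j) = j • c g := by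
  have hρinv : A.ρ g⁻¹ (c g) = c g := by
    conv_lhs => rw [← hg]
    simp [← Module.End.mul_apply, ← map_mul]
  have hcinv : c g⁻¹ = -c g := by
    rw [← hρinv, ← map_neg, ← cocycles₁_map_inv c g, ← Module.End.mul_apply, ← map_mul,
      inv_mul_cancel, map_one, Module.End.one_apply]
  induction j using Int.induction_on with
  | zero => simp
  | succ j ih =>
    rw [add_comm, zpow_add, zpow_one, (mem_cocycles₁_iff c).1 c.2, ih, map_zsmul, hg, add_smul,
      one_smul, add_comm]
  | pred j ih =>
    rw [sub_eq_neg_add, zpow_add, zpow_neg_one, (mem_cocycles₁_iff c).1 c.2, ih, map_zsmul, hρinv,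
      hcinv, add_smul, neg_one_smul, add_comm]

end Cocycles

namespace Representation

variable {k G X M : Type*} [CommRing k] [Group G] [AddCommGroup M] [Module k M]

theorem apply_zpow_eq_one (ρ : Representation k G M) {g : G} (hg : ρ g = 1) (j : ℤ) :
    ρ (g ^ j) = 1 := by
  have hunit : ρ.asGroupHom g = 1 := Units.ext (by rw [asGroupHom_apply, hg]; rfl)
  rw [← asGroupHom_apply, map_zpow, hunit, one_zpow]
  rfl

def funLeft (φ : G →* Equiv.Perm X) (ρ : Representation k G M) :
    Representation k G (X → M) where
  toFun g := (ρ g).compLeft X ∘ₗ LinearMap.funLeft k M (φ g⁻¹)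
  map_one' := by ext; simp
  map_mul' g h := by ext; simp

@[simp] theorem funLeft_apply (φ : G →* Equiv.Perm X) (ρ : Representation k G M) (g : G)
    (P : X → M) (x : X) : funLeft φ ρ g P x = ρ g (P (φ g⁻¹ x)) := rfl

end Representation

theorem Fin.addRight_one_zpow_eq_one {q : ℕ} [NeZero q] {z : ℤ} (hz : (q : ℤ) ∣ z) :
    Equiv.addRight (1 : Fin q) ^ z = 1 := by
  obtain ⟨z₀, rfl⟩ := hz
  open Fin.CommRing in
  rw [Equiv.zsmul_addRight, zsmul_one, Int.cast_mul, Int.cast_natCast, Fin.natCast_self, zero_mul,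
    Equiv.addRight_zero, Equiv.Perm.one_def]

def LinearEquiv.toAffineEquivHom (k V : Type*) [Ring k] [AddCommGroup V] [Module k V] :
    (V ≃ₗ[k] V) →* (V ≃ᵃ[k] V) where
  toFun e := e.toAffineEquiv
  map_one' := rfl
  map_mul' _ _ := rfl

namespace BS

variable {n m : ℤ}

abbrev t (n m : ℤ) : BS n m := PresentedGroup.of 1

theorem a_zpow_mul_t : a n m ^ n * t n m = t n m * a n m ^ m := by
  have h : a n m ^ n * t n m * a n m ^ (-m) * (t n m)⁻¹ = 1 :=
    PresentedGroup.one_of_mem (Set.mem_singleton _)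
  rwa [← mul_inv_eq_one, mul_inv_rev, ← zpow_neg, ← mul_assoc]

section Lift

variable {G : Type*} [Group G]

def lift (x y : G) (h : x ^ n * y = y * x ^ m) : BS n m →* G :=
  PresentedGroup.toGroup (f := ![x, y]) fun r hr => by
    rw [Set.mem_singleton_iff.1 hr]
    simp [h]

@[simp] theorem lift_a (x y : G) (h : x ^ n * y = y * x ^ m) : lift x y h (a n m) = x :=
  PresentedGroup.toGroup.of _

@[simp] theorem lift_t (x y : G) (h : x ^ n * y = y * x ^ m) : lift x y h (t n m) = y :=
  PresentedGroup.toGroup.of _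

theorem hom_ext {φ ψ : BS n m →* G} (ha : φ (a n m) = ψ (a n m)) (ht : φ (t n m) = ψ (t n m)) :
    φ = ψ :=
  PresentedGroup.ext fun i => by fin_cases i <;> assumption

end Lift

theorem apply_a_zpow_eq_one {k M : Type*} [CommRing k] [AddCommGroup M] [Module k M]
    {ρ : Representation k (BS n m) M} {q : ℕ} (haq : ρ (a n m ^ q) = 1) {j : ℤ}
    (hj : (q : ℤ) ∣ j) : ρ (a n m ^ j) = 1 := by
  obtain ⟨j₀, rfl⟩ := hj
  rw [zpow_mul, zpow_natCast]
  exact ρ.apply_zpow_eq_one haq j₀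

/- The cocycle is read off from the affine action `g ↦ (θ g +ᵥ ρ g ·)`. -/
theorem exists_mem_cocycles₁ {k W : Type} [CommRing k] [AddCommGroup W] [Module k W]
    (ρ : Representation k (BS n m) W) (w : W) (hw : ρ (a n m ^ n) w = w) :
    ∃ θ ∈ cocycles₁ (Rep.of ρ), θ (a n m) = 0 ∧ θ (t n m) = w := by
  let L : BS n m →* (W ≃ₗ[k] W) :=
    (LinearMap.GeneralLinearGroup.generalLinearEquiv k W).toMonoidHom.comp ρ.asGroupHom
  let A := (LinearEquiv.toAffineEquivHom k W).comp L
  have hL : ∀ g x, L g x = ρ g x := fun _ _ => rfl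
  have hA : ∀ g x, A g x = ρ g x := fun _ _ => rfl
  let Φ : BS n m →* (W ≃ᵃ[k] W) := lift (A (a n m)) (AffineEquiv.constVAdd k W w * A (t n m)) <| by
    simp only [← map_zpow]
    ext x
    simp only [AffineEquiv.coe_mul, Function.comp_apply, hA, AffineEquiv.constVAdd_apply,
      vadd_eq_add, map_add, hw, ← Module.End.mul_apply, ← map_mul, a_zpow_mul_t]
  have hlin : AffineEquiv.linearHom.comp Φ = L := hom_ext (by ext; rfl) (by ext; rfl)
  refine ⟨fun g => Φ g 0, (mem_cocycles₁_iff _).2 fun g h => ?_, by simp [Φ, hA], by simp [Φ, hA]⟩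
  have hdecomp := (Φ g).map_vadd 0 (Φ h 0)
  simp only [vadd_eq_add, add_zero] at hdecomp
  simp only [map_mul, AffineEquiv.coe_mul, Function.comp_apply, hdecomp, ← hL]
  rw [← hlin]
  rfl

def affineAction (hn : n ≠ 0) (hm : m ≠ 0) : BS n m →* Equiv.Perm ℚ :=
  lift (Equiv.addRight 1) (Equiv.mulLeft₀ ((n : ℚ) / m) (by simp [hn, hm])) <| by
    ext x
    simp only [Equiv.zsmul_addRight, zsmul_eq_mul, mul_one, Equiv.Perm.coe_mul,
      Equiv.coe_addRight, Equiv.mulLeft₀_apply, Function.comp_apply]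
    field_simp

theorem affineAction_a_zpow (hn : n ≠ 0) (hm : m ≠ 0) (j : ℤ) (x : ℚ) :
    affineAction hn hm (a n m ^ j) x = x + j := by
  simp [affineAction]

section Obstruction

variable {k M : Type} [CommRing k] [AddCommGroup M] [Module k M] (hn : n ≠ 0) (hm : m ≠ 0)
  {ρ : Representation k (BS n m) M}

local notation "ρV" => Representation.funLeft (affineAction hn hm) ρ
local notation "ι" => (LinearMap.const : M →ₗ[k] ℚ → M)

def floorStep (n : ℤ) (e : M) : ℚ → M := fun x => ⌊x / n⌋ • e

theorem funLeft_a_zpow_floorStep (hρ : ρ (a n m ^ n) = 1) (e : M) :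
    ρV (a n m ^ n) (floorStep n e) = floorStep n e - ι e := by
  ext x
  have hn' : (n : ℚ) ≠ 0 := by exact_mod_cast hn
  simp only [Representation.funLeft_apply, hρ, ← zpow_neg, affineAction_a_zpow, floorStep,
    Module.End.one_apply, Pi.sub_apply, LinearMap.const_apply, Function.const_apply]
  rw [Int.cast_neg, ← sub_eq_add_neg, sub_div, div_self hn', Int.floor_sub_one, sub_smul, one_smul]

theorem fixed_of_mem_cocycles₁ {q : ℕ} (hqn : (q : ℤ) ∣ n) (hqm : (q : ℤ) ∣ m)
    (ht : ρ (t n m) = 1) (haq : ρ (a n m ^ q) = 1) {e : M} (c : cocycles₁ (Rep.of ρV))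
    (hca : c (a n m) ∈ LinearMap.range ι) (hct : c (t n m) - floorStep n e ∈ LinearMap.range ι) :
    ρ (a n m) e = e := by
  have hι : Function.Injective ι := fun u v h => congrFun h 0
  have hιρ : ∀ g u, ρV g (ι u) = ι (ρ g u) := fun _ _ => rfl
  have hcocycle := (mem_cocycles₁_iff c).1 c.2
  obtain ⟨u, hu⟩ := hca
  obtain ⟨v, hv⟩ := cocycles₁_map_pow_mem c (N := LinearMap.range ι)
    (fun g => by rintro _ ⟨x, rfl⟩; exact ⟨ρ g x, rfl⟩) ⟨u, hu⟩ q
  obtain ⟨w, hw⟩ := hct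
  have hfix : ρV (a n m ^ q) (c (a n m ^ q)) = c (a n m ^ q) := by rw [← hv, hιρ, haq]; rfl
  have hpow : ∀ {j : ℤ} (j₀ : ℤ), j = q * j₀ → c (a n m ^ j) = j₀ • ι v := fun j₀ hj => by
    rw [hj, zpow_mul, zpow_natCast, cocycles₁_map_zpow_of_fixed c hfix, hv]
  have hva : ρ (a n m) v = v := by
    have h : c (a n m * a n m ^ q) = c (a n m ^ q * a n m) := by rw [← pow_succ, ← pow_succ']
    rw [hcocycle, hcocycle, ← hu, ← hv] at h
    simp only [hιρ, haq, Module.End.one_apply] at h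
    exact hι (add_right_cancel (h.trans (add_comm _ _)))
  obtain ⟨n₀, hn₀⟩ := hqn
  obtain ⟨m₀, hm₀⟩ := hqm
  have hρan := apply_a_zpow_eq_one haq ⟨n₀, hn₀⟩
  have hrel := congrArg c (a_zpow_mul_t (n := n) (m := m))
  rw [hcocycle, hcocycle, hpow n₀ hn₀, hpow m₀ hm₀,
    show c (t n m) = floorStep n e + ι w by rw [hw]; abel] at hrel
  simp only [map_add, funLeft_a_zpow_floorStep hn hm hρan, map_zsmul, hιρ, hρan, ht,
    Module.End.one_apply] at hrel
  have he : e = (n₀ - m₀) • v := hι (by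
    rw [map_zsmul, sub_smul]
    linear_combination (norm := module) -hrel)
  rw [he, map_zsmul, hva]

end Obstruction

theorem not_subsingleton_H2 {k M : Type} [CommRing k] [AddCommGroup M] [Module k M]
    (hn : n ≠ 0) (hm : m ≠ 0) (ρ : Representation k (BS n m) M) {q : ℕ} (hqn : (q : ℤ) ∣ n)
    (hqm : (q : ℤ) ∣ m) (ht : ρ (t n m) = 1) (haq : ρ (a n m ^ q) = 1) {e : M}
    (he : ρ (a n m) e ≠ e) :
    ¬ Subsingleton (H2 (Rep.of ρ)) := by
  intro hH2
  let ρV := ρ.funLeft (affineAction hn hm)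
  let ι : M →ₗ[k] ℚ → M := LinearMap.const
  let N := LinearMap.range ι
  have hN : ∀ g, N ≤ N.comap (ρV g) := fun g => by rintro _ ⟨x, rfl⟩; exact ⟨ρ g x, rfl⟩
  obtain ⟨θ, hθ, hθa, hθt⟩ := exists_mem_cocycles₁ (ρV.quotient N hN) (N.mkQ (floorStep n e)) (by
    simp only [Representation.quotient_apply, Submodule.mkQ_apply, Submodule.mapQ_apply]
    rw [funLeft_a_zpow_floorStep hn hm (apply_a_zpow_eq_one haq hqn), Submodule.Quotient.eq,
      sub_sub_cancel_left]
    exact N.neg_mem ⟨e, rfl⟩)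
  obtain ⟨x, hx⟩ := exists_sub_mem_cocycles₁_of_subsingleton_H2 (ρM := ρ) (ρV := ρV) (ι := ι)
    (fun u v h => congrFun h 0) (fun _ _ => rfl) (fun g => (θ g).out) (fun g h => by
      have hρW : ∀ v, Submodule.Quotient.mk (p := N) (ρV g v) =
          ρV.quotient N hN g (Submodule.Quotient.mk v) := fun _ => rfl
      rw [← Submodule.Quotient.mk_eq_zero, Submodule.Quotient.mk_add, Submodule.Quotient.mk_sub,
        hρW, Submodule.Quotient.mk_out, Submodule.Quotient.mk_out, Submodule.Quotient.mk_out,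
        (mem_cocycles₁_iff θ).1 hθ]
      abel)
  have hc : ∀ g, N.mkQ ((θ g).out - ι (x g)) = θ g := fun g => by simp [N]
  refine he (fixed_of_mem_cocycles₁ hn hm hqn hqm ht haq ⟨_, hx⟩ ?_ ?_)
  · exact (Submodule.Quotient.mk_eq_zero N).1 ((hc _).trans hθa)
  · refine (Submodule.Quotient.mk_eq_zero N).1 ?_
    rw [Submodule.Quotient.mk_sub, sub_eq_zero]
    exact (hc _).trans hθt

def rotationRep (k : Type*) [CommRing k] (q : ℕ) [NeZero q] (hqn : (q : ℤ) ∣ n)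
    (hqm : (q : ℤ) ∣ m) : Representation k (BS n m) (Fin q → k) :=
  (Representation.trivial k (BS n m) k).funLeft <| lift (Equiv.addRight 1) 1 <| by
    rw [Fin.addRight_one_zpow_eq_one hqn, Fin.addRight_one_zpow_eq_one hqm]

section Rotation

variable {k : Type*} [CommRing k] {q : ℕ} [NeZero q] (hqn : (q : ℤ) ∣ n) (hqm : (q : ℤ) ∣ m)

theorem rotationRep_t : rotationRep k q hqn hqm (t n m) = 1 :=
  LinearMap.ext fun _ => funext fun _ => by simp [rotationRep]

theorem rotationRep_a_pow : rotationRep k q hqn hqm (a n m ^ q) = 1 :=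
  LinearMap.ext fun _ => funext fun _ => by
    simp [rotationRep, ← zpow_natCast, Fin.addRight_one_zpow_eq_one (dvd_refl (q : ℤ))]

theorem rotationRep_a_single_ne [Nontrivial k] (hq : 2 ≤ q) :
    rotationRep k q hqn hqm (a n m) (Pi.single 0 1) ≠ Pi.single 0 1 := by
  have h10 : (1 : Fin q) ≠ 0 := by rw [Ne, Fin.one_eq_zero_iff]; omega
  intro h
  simpa [rotationRep, h10] using congrFun h 1

end Rotation

end BS

theorem BS_H2_nonvanishing_of_isocratic_not_coprime_general
    (n m : ℤ) (hn : n ≠ 0) (hm : m ≠ 0)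
    (p : ℕ) (hp : p.Prime)
    (q : ℕ) (hq : q.Prime) (hqdvd : q ∣ Int.gcd n m) :
    ∃ ρ : Representation (ZMod p) (BS n m) (Fin q → ZMod p),
      ¬ Subsingleton (groupCohomology (Rep.of ρ) 2) := by
  have : NeZero q := ⟨hq.ne_zero⟩
  have : Fact (1 < p) := ⟨hp.one_lt⟩
  have hqn : (q : ℤ) ∣ n := (Int.natCast_dvd_natCast.2 hqdvd).trans (Int.gcd_dvd_left n m)
  have hqm : (q : ℤ) ∣ m := (Int.natCast_dvd_natCast.2 hqdvd).trans (Int.gcd_dvd_right n m)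
  exact ⟨BS.rotationRep (ZMod p) q hqn hqm, BS.not_subsingleton_H2 hn hm _ hqn hqm
    (BS.rotationRep_t hqn hqm) (BS.rotationRep_a_pow hqn hqm)
    (BS.rotationRep_a_single_ne hqn hqm hq.two_le)⟩

/-- Paper's Lemma 4.5 (FunnyModule) for a cycle of length one: if `n` and `m` are
isocratic but not coprime, `p` is a prime dividing `n·m` and `q` a prime dividing
`gcd(n,m)`, then there is a representation of `BS(n,m)` on `𝔽_p^q` with nonvanishing
second cohomology. -/
theorem BS_H2_nonvanishing_of_isocratic_not_coprime
    (n m : ℤ) (hn : n ≠ 0) (hm : m ≠ 0)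
    (hiso : Isocratic n m) (hncop : ¬ IsCoprime n m)
    (p : ℕ) (hp : p.Prime) (hpdvd : (p : ℤ) ∣ n * m)
    (q : ℕ) (hq : q.Prime) (hqdvd : q ∣ Int.gcd n m) :
    ∃ ρ : Representation (ZMod p) (BS n m) (Fin q → ZMod p),
      ¬ Subsingleton (groupCohomology (Rep.of ρ) 2) :=
  BS_H2_nonvanishing_of_isocratic_not_coprime_general n m hn hm p hp q hq hqdvd
end

section
/- Let Γ = Γ((n_i),(m_i)) be a generalised Baumslag–Solitar group over a cycle of length s whose augmentation products n(Ξ) and m(Ξ) are isocratic. Then for every index i ∈ {1,…,s}: (i) for every prime p with ν_p(n(Ξ)) = ν_p(m(Ξ)) and every natural number l, there exist a finite group Q and a homomorphism φ : Γ → Q such that p^l divides the order of φ(a_i); and (ii) for every prime p with ν_p(n(Ξ)) ≠ ν_p(m(Ξ)), for every finite group Q and every homomorphism φ : Γ → Q, p does not divide the order of φ(a_i). (Together these say that Γ induces on each vertex group ⟨a_i⟩ exactly the full pro-I(n(Ξ),m(Ξ)) topology, where I(n,m) is the set of primes p with ν_p(n) = ν_p(m).) -/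
/-- The relators of a generalised Baumslag–Solitar group over a cycle of length `s`:
generators are `some i` (= `a_{i+1}`) for `i : Fin s` together with the stable letter
`none` (= `t`); the relator indexed by a non-final `i` is `a_i^{n_i} a_{i+1}^{-m_i}`,
and the relator indexed by the final vertex is `t a_s^{n_s} t⁻¹ a_1^{-m_s}`. -/
def cycleRel (s : ℕ) (n m : Fin s → ℤ) (i : Fin s) : FreeGroup (Option (Fin s)) :=
  if h : (i : ℕ) + 1 < s then
    FreeGroup.of (some i) ^ (n i) * FreeGroup.of (some ⟨(i : ℕ) + 1, h⟩) ^ (-(m i))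
  else
    FreeGroup.of none * FreeGroup.of (some i) ^ (n i) * (FreeGroup.of none)⁻¹ *
      FreeGroup.of (some ⟨0, i.pos⟩) ^ (-(m i))

/-- The generalised Baumslag–Solitar group over a cycle of length `s`, with presentation
`⟨a_1,…,a_s, t ∣ a_i^{n_i} = a_{i+1}^{m_i} (1 ≤ i ≤ s−1), t a_s^{n_s} t⁻¹ = a_1^{m_s}⟩`. -/
abbrev GBSCycle (s : ℕ) (n m : Fin s → ℤ) := PresentedGroup (Set.range (cycleRel s n m))

/-- The vertex generator `a_i` of the generalised Baumslag–Solitar group over a cycle. -/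
abbrev GBSCycle.a (s : ℕ) (n m : Fin s → ℤ) (i : Fin s) : GBSCycle s n m :=
  PresentedGroup.of (some i)

/-!
Part (ii). In a finite quotient let `e_j` be the `p`-adic valuation of the order of the image
of `a_j`. As `a_j^{n_j}` is conjugate to `a_{j+1}^{m_j}`, `e_j ∸ ν_p(n_j) = e_{j+1} ∸ ν_p(m_j)`.
If `p` divides `n(Ξ)` but not `m(Ξ)` this reads `e_{j+1} = e_j ∸ ν_p(n_j)`, so `e` decreases
weakly around the cycle, hence is constant, and it vanishes at a vertex with `p ∣ n_j`; the
other case is the same with the cycle reversed. Isocraticity is what guarantees that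
`ν_p(n(Ξ)) ≠ ν_p(m(Ξ))` forces `p` to divide exactly one of the two products.

Part (i). The labels `x_j = n_1 ⋯ n_{j-1} m_j ⋯ m_s` satisfy `n_j x_j = m_j x_{j+1}`, and
`n_s x_s = n(Ξ) m_s`, `x_1 = m(Ξ)`. If `ν_p(n(Ξ)) = ν_p(m(Ξ))`, some unit `u` modulo `q = p^L`
has `u n(Ξ) ≡ m(Ξ)`, so `a_j ↦ (y ↦ x_j + y)`, `t ↦ (y ↦ u y)` is an action on `ℤ/q` in which
`a_i` acts with order `q / gcd(q, x_i)`, a multiple of `p^l` once `L = l + ν_p(x_i)`.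
-/

open Finset

section Cycle

variable {s : ℕ} [NeZero s]

theorem Fin.add_one_eq_zero_of_val_add_one_eq {j : Fin s} (hj : (j : ℕ) + 1 = s) : j + 1 = 0 := by
  ext
  rw [Fin.val_add, Fin.val_one', Nat.add_mod_mod, hj, Nat.mod_self, Fin.val_zero]

open Fin.NatCast in
theorem Fin.apply_eq_of_forall_apply_add_one_eq {α : Type*} {f : Fin s → α}
    (h : ∀ j, f (j + 1) = f j) (j k : Fin s) : f j = f k := by
  have key : ∀ t : ℕ, f (t : Fin s) = f 0 := by
    intro t
    induction t with
    | zero => simp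
    | succ t ih => rw [Nat.cast_succ, h, ih]
  rw [← Fin.cast_val_eq_self j, ← Fin.cast_val_eq_self k, key, key]

theorem Fin.apply_add_one_eq_of_forall_apply_add_one_le {M : Type*} [AddCommMonoid M]
    [PartialOrder M] [IsOrderedCancelAddMonoid M] {f : Fin s → M}
    (h : ∀ j, f (j + 1) ≤ f j) (j : Fin s) : f (j + 1) = f j :=
  (sum_eq_sum_iff_of_le fun j _ => h j).mp (Equiv.sum_comp (Equiv.addRight 1) f) j (mem_univ j)

theorem Fin.eq_zero_of_forall_apply_add_one_eq_tsub {e a : Fin s → ℕ}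
    (h : ∀ j, e (j + 1) = e j - a j) {j₀ : Fin s} (ha : a j₀ ≠ 0) (j : Fin s) : e j = 0 := by
  have hstable : ∀ j, e (j + 1) = e j :=
    Fin.apply_add_one_eq_of_forall_apply_add_one_le fun j => (h j).trans_le tsub_le_self
  have h₀ : e j₀ = 0 := by
    have := h j₀
    rw [hstable] at this
    omega
  rw [Fin.apply_eq_of_forall_apply_add_one_eq hstable j j₀, h₀]

theorem Fin.eq_zero_of_forall_apply_eq_apply_add_one_tsub {e b : Fin s → ℕ}
    (h : ∀ j, e j = e (j + 1) - b j) {j₀ : Fin s} (hb : b j₀ ≠ 0) (j : Fin s) : e j = 0 := by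
  simpa using Fin.eq_zero_of_forall_apply_add_one_eq_tsub (e := fun j => e (-j))
    (a := fun j => b (-(j + 1))) (j₀ := -(j₀ + 1)) (fun j => by simpa using h (-(j + 1)))
    (by simpa using hb) (-j)

end Cycle

theorem IsConj.orderOf_eq {G : Type*} [Group G] {x y : G} (h : IsConj x y) :
    orderOf x = orderOf y :=
  let ⟨_, hc⟩ := h
  SemiconjBy.orderOf_eq _ hc

theorem padicValNat_orderOf_zpow {G : Type*} [Group G] (p : ℕ) [Fact p.Prime] {x : G}
    (hx : orderOf x ≠ 0) {k : ℤ} (hk : k ≠ 0) :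
    padicValNat p (orderOf (x ^ k)) = padicValNat p (orderOf x) - padicValInt p k := by
  have hk' : k.natAbs ≠ 0 := Int.natAbs_ne_zero.mpr hk
  have habs : orderOf (x ^ k) = orderOf (x ^ k.natAbs) := by
    obtain ⟨k, rfl | rfl⟩ := Int.eq_nat_or_neg k <;> simp [orderOf_inv]
  rw [habs, orderOf_pow' x hk', padicValInt, ← Nat.factorization_def _ Fact.out,
    ← Nat.factorization_def _ Fact.out, ← Nat.factorization_def _ Fact.out,
    Nat.factorization_div (Nat.gcd_dvd_left _ _), Finsupp.tsub_apply,
    Nat.factorization_gcd hx hk', Finsupp.inf_apply]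
  omega

theorem Int.exists_eq_pow_padicValInt_mul_not_dvd {p : ℕ} [Fact p.Prime] {z : ℤ} (hz : z ≠ 0) :
    ∃ z', z = p ^ padicValInt p z * z' ∧ ¬ (p : ℤ) ∣ z' := by
  obtain ⟨z', hz'⟩ := padicValInt_dvd (p := p) z
  refine ⟨z', hz', fun hdvd => ?_⟩
  have : (p : ℤ) ^ (padicValInt p z + 1) ∣ z := by
    rw [pow_succ]
    exact (mul_dvd_mul_left _ hdvd).trans (dvd_of_eq hz'.symm)
  rcases (padicValInt_dvd_iff _ z).mp this with h | h
  · exact hz h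
  · omega

theorem padicValInt_eq_zero_of_not_dvd_prod {ι : Type*} [Fintype ι] {p : ℕ} {k : ι → ℤ}
    (h : ¬ (p : ℤ) ∣ ∏ j, k j) (j : ι) : padicValInt p (k j) = 0 :=
  padicValInt.eq_zero_of_not_dvd fun hj => h (hj.trans (dvd_prod_of_mem _ (mem_univ j)))

theorem exists_padicValInt_ne_zero_of_dvd_prod {ι : Type*} [Fintype ι] {p : ℕ} [Fact p.Prime]
    {k : ι → ℤ} (hk : ∀ j, k j ≠ 0) (h : (p : ℤ) ∣ ∏ j, k j) : ∃ j, padicValInt p (k j) ≠ 0 := by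
  obtain ⟨j, -, hj⟩ := (Nat.prime_iff_prime_int.mp Fact.out).exists_mem_finset_dvd h
  refine ⟨j, fun h0 => ?_⟩
  rcases (padicValInt_dvd_iff 1 (k j)).mp (by simpa using hj) with h' | h'
  · exact hk j h'
  · omega

theorem ZMod.isUnit_intCast_of_not_dvd {p : ℕ} (hp : p.Prime) (L : ℕ) {z : ℤ}
    (hz : ¬ (p : ℤ) ∣ z) : IsUnit (z : ZMod (p ^ L)) := by
  have hcop : IsCoprime z ((p : ℤ) ^ L) :=
    ((Nat.prime_iff_prime_int.mp hp).coprime_iff_not_dvd.mpr hz).pow_left.symm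
  have := hcop.map (Int.castRingHom (ZMod (p ^ L)))
  rwa [map_pow, eq_intCast, eq_intCast, Int.cast_natCast, ← Nat.cast_pow, ZMod.natCast_self,
    isCoprime_zero_right] at this

theorem ZMod.exists_unit_mul_intCast_eq {p : ℕ} [Fact p.Prime] (L : ℕ) {N M : ℤ}
    (hN : N ≠ 0) (hM : M ≠ 0) (h : padicValInt p N = padicValInt p M) :
    ∃ u : (ZMod (p ^ L))ˣ, u * (N : ZMod (p ^ L)) = M := by
  obtain ⟨N', hN', hpN'⟩ := Int.exists_eq_pow_padicValInt_mul_not_dvd (p := p) hN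
  obtain ⟨M', hM', hpM'⟩ := Int.exists_eq_pow_padicValInt_mul_not_dvd (p := p) hM
  have hUN := ZMod.isUnit_intCast_of_not_dvd Fact.out L hpN'
  have hUM := ZMod.isUnit_intCast_of_not_dvd Fact.out L hpM'
  refine ⟨hUM.unit * hUN.unit⁻¹, ?_⟩
  rw [hN', hM', h, Units.val_mul, IsUnit.unit_spec]
  push_cast
  linear_combination ((p : ZMod (p ^ L)) ^ padicValInt p M * M') * hUN.val_inv_mul

theorem ZMod.pow_dvd_addOrderOf_intCast {p : ℕ} [Fact p.Prime] {x : ℤ} (hx : x ≠ 0) (l : ℕ) :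
    p ^ l ∣ addOrderOf (x : ZMod (p ^ (l + padicValInt p x))) := by
  obtain ⟨x', hx', hpx'⟩ := Int.exists_eq_pow_padicValInt_mul_not_dvd (p := p) hx
  have h := addOrderOf_nsmul_eq_zero (x : ZMod (p ^ (l + padicValInt p x)))
  rw [nsmul_eq_mul, ← Int.cast_natCast, ← Int.cast_mul, ZMod.intCast_zmod_eq_zero_iff_dvd] at h
  generalize addOrderOf ((x : ℤ) : ZMod (p ^ (l + padicValInt p x))) = k at h ⊢
  generalize padicValInt p x = c at hx' h
  subst hx'
  have hp : (p : ℤ) ^ c ≠ 0 := pow_ne_zero _ (by exact_mod_cast (Fact.out : p.Prime).ne_zero)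
  push_cast at h
  rw [pow_add, mul_comm _ ((p : ℤ) ^ c), mul_left_comm, mul_dvd_mul_iff_left hp] at h
  have hcop : IsCoprime ((p : ℤ) ^ l) x' :=
    ((Nat.prime_iff_prime_int.mp Fact.out).coprime_iff_not_dvd.mpr hpx').pow_left
  exact_mod_cast hcop.dvd_of_dvd_mul_right h

theorem Equiv.constVAddHom_injective (G P : Type*) [AddGroup G] [AddTorsor G P] [Nonempty P] :
    Function.Injective (Equiv.constVAddHom G P) := fun v w h => by
  inhabit P
  simpa [Equiv.constVAddHom] using vadd_right_cancel _ (Equiv.congr_fun h default)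

theorem Equiv.constVAddHom_ofAdd_zpow {G P : Type*} [AddGroup G] [AddTorsor G P] (y : G) (k : ℤ) :
    Equiv.constVAddHom G P (.ofAdd y) ^ k = Equiv.constVAddHom G P (.ofAdd (k • y)) := by
  rw [← map_zpow, ← ofAdd_zsmul]

theorem MulAction.toPermHom_conj_constVAddHom_ofAdd {R : Type*} [CommRing R] (u : Rˣ) (y : R) :
    MulAction.toPermHom Rˣ R u * Equiv.constVAddHom R R (.ofAdd y) *
        (MulAction.toPermHom Rˣ R u)⁻¹ = Equiv.constVAddHom R R (.ofAdd (u * y)) := by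
  ext z
  simp [Equiv.constVAddHom, Units.smul_def]

section VertexLabel

variable {s : ℕ} (n m : Fin s → ℤ)

def vertexLabel (j : Fin s) : ℤ :=
  (∏ k ∈ Iio j, n k) * ∏ k ∈ Ici j, m k

variable {n m}

theorem vertexLabel_ne_zero (hn : ∀ i, n i ≠ 0) (hm : ∀ i, m i ≠ 0) (j : Fin s) :
    vertexLabel n m j ≠ 0 :=
  mul_ne_zero (prod_ne_zero_iff.mpr fun k _ => hn k) (prod_ne_zero_iff.mpr fun k _ => hm k)

theorem mul_vertexLabel_of_lt [NeZero s] (j : Fin s) (hj : (j : ℕ) + 1 < s) :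
    n j * vertexLabel n m j = m j * vertexLabel n m (j + 1) := by
  have hval := Fin.val_add_one_of_lt' hj
  have hIio : Iio (j + 1) = insert j (Iio j) := by
    ext k
    simp only [mem_Iio, mem_insert, Fin.lt_def, Fin.ext_iff, hval]
    omega
  have hIci : Ici j = insert j (Ici (j + 1)) := by
    ext k
    simp only [mem_Ici, mem_insert, Fin.le_def, Fin.ext_iff, hval]
    omega
  have hIci' : j ∉ Ici (j + 1) := by simp only [mem_Ici, not_le, Fin.lt_def, hval]; omega
  rw [vertexLabel, vertexLabel, hIio, hIci, prod_insert hIci', prod_insert (by simp)]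
  ring

theorem mul_vertexLabel_of_eq (j : Fin s) (hj : (j : ℕ) + 1 = s) :
    n j * vertexLabel n m j = (∏ k, n k) * m j := by
  have hIci : Ici j = {j} := by
    ext k
    simp only [mem_Ici, mem_singleton, Fin.le_def, Fin.ext_iff]
    omega
  have huniv : univ = insert j (Iio j) := by
    ext k
    simp only [mem_univ, mem_insert, mem_Iio, Fin.lt_def, Fin.ext_iff, true_iff]
    omega
  rw [vertexLabel, hIci, prod_singleton, huniv, prod_insert (by simp)]
  ring

theorem vertexLabel_zero [NeZero s] : vertexLabel n m 0 = ∏ k, m k := by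
  have : Iio (0 : Fin s) = ∅ := by ext k; simp
  simp [vertexLabel, this]

end VertexLabel

namespace GBSCycle

variable {s : ℕ} {n m : Fin s → ℤ}

theorem cycleRel_of_lt [NeZero s] (j : Fin s) (hj : (j : ℕ) + 1 < s) :
    cycleRel s n m j =
      FreeGroup.of (some j) ^ n j * FreeGroup.of (some (j + 1)) ^ (-m j) := by
  have : (⟨j + 1, hj⟩ : Fin s) = j + 1 := Fin.ext (Fin.val_add_one_of_lt' hj).symm
  rw [cycleRel, dif_pos hj, this]

theorem cycleRel_of_eq [NeZero s] (j : Fin s) (hj : (j : ℕ) + 1 = s) :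
    cycleRel s n m j = FreeGroup.of none * FreeGroup.of (some j) ^ n j * (FreeGroup.of none)⁻¹ *
      FreeGroup.of (some (j + 1)) ^ (-m j) := by
  have : (⟨0, j.pos⟩ : Fin s) = j + 1 := by
    rw [Fin.add_one_eq_zero_of_val_add_one_eq hj]
    rfl
  rw [cycleRel, dif_neg hj.not_lt, this]

theorem isConj_a_zpow [NeZero s] (j : Fin s) :
    IsConj (a s n m j ^ n j) (a s n m (j + 1) ^ m j) := by
  have h := PresentedGroup.one_of_mem (Set.mem_range_self (f := cycleRel s n m) j)
  rcases (Nat.succ_le_of_lt j.isLt).lt_or_eq with hj | hj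
  · rw [cycleRel_of_lt j hj] at h
    simp only [map_mul, map_inv, map_zpow, zpow_neg, mul_inv_eq_one] at h
    exact isConj_iff.mpr ⟨1, by rw [one_mul, inv_one, mul_one]; exact h⟩
  · rw [cycleRel_of_eq j hj] at h
    simp only [map_mul, map_inv, map_zpow, zpow_neg, mul_inv_eq_one] at h
    exact isConj_iff.mpr ⟨_, h⟩

section Lift

variable [NeZero s] {G : Type*} [Group G] (A : Fin s → G) (T : G)
  (h_edge : ∀ j : Fin s, (j : ℕ) + 1 < s → A j ^ n j = A (j + 1) ^ m j)
  (h_last : ∀ j : Fin s, (j : ℕ) + 1 = s → T * A j ^ n j * T⁻¹ = A (j + 1) ^ m j)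

def lift : GBSCycle s n m →* G :=
  PresentedGroup.toGroup (f := fun o => o.elim T A) <| by
    rintro _ ⟨j, rfl⟩
    rcases (Nat.succ_le_of_lt j.isLt).lt_or_eq with hj | hj
    · simp [cycleRel_of_lt j hj, h_edge j hj]
    · simp [cycleRel_of_eq j hj, ← h_last j hj]

theorem lift_a (j : Fin s) : lift A T h_edge h_last (a s n m j) = A j :=
  PresentedGroup.toGroup.of _

end Lift

def affineRep [NeZero s] (R : Type*) [CommRing R] (u : Rˣ)
    (hu : u * ((∏ j, n j : ℤ) : R) = ((∏ j, m j : ℤ) : R)) : GBSCycle s n m →* Equiv.Perm R :=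
  lift (fun j => Equiv.constVAddHom R R (.ofAdd (vertexLabel n m j : R)))
    (MulAction.toPermHom Rˣ R u)
    (fun j hj => by
      rw [Equiv.constVAddHom_ofAdd_zpow, Equiv.constVAddHom_ofAdd_zpow, zsmul_eq_mul,
        zsmul_eq_mul, ← Int.cast_mul, ← Int.cast_mul, mul_vertexLabel_of_lt j hj])
    (fun j hj => by
      rw [Equiv.constVAddHom_ofAdd_zpow, Equiv.constVAddHom_ofAdd_zpow,
        MulAction.toPermHom_conj_constVAddHom_ofAdd, zsmul_eq_mul, zsmul_eq_mul, ← Int.cast_mul,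
        mul_vertexLabel_of_eq j hj, Fin.add_one_eq_zero_of_val_add_one_eq hj, vertexLabel_zero,
        Int.cast_mul]
      congr 2
      linear_combination (m j : R) * hu)

theorem orderOf_affineRep_a [NeZero s] (R : Type*) [CommRing R] (u : Rˣ)
    (hu : u * ((∏ j, n j : ℤ) : R) = ((∏ j, m j : ℤ) : R)) (j : Fin s) :
    orderOf (affineRep R u hu (a s n m j)) = addOrderOf (vertexLabel n m j : R) := by
  rw [affineRep, lift_a, orderOf_injective _ (Equiv.constVAddHom_injective R R),
    orderOf_ofAdd_eq_addOrderOf]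

theorem exists_pow_dvd_orderOf_map_a [NeZero s] (hn : ∀ i, n i ≠ 0) (hm : ∀ i, m i ≠ 0)
    {p : ℕ} [Fact p.Prime] (hv : padicValInt p (∏ j, n j) = padicValInt p (∏ j, m j))
    (i : Fin s) (l : ℕ) :
    ∃ (Q : Type) (_ : Group Q) (_ : Finite Q) (φ : GBSCycle s n m →* Q),
      p ^ l ∣ orderOf (φ (a s n m i)) := by
  set L := l + padicValInt p (vertexLabel n m i)
  obtain ⟨u, hu⟩ := ZMod.exists_unit_mul_intCast_eq L
    (prod_ne_zero_iff.mpr fun j _ => hn j) (prod_ne_zero_iff.mpr fun j _ => hm j) hv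
  refine ⟨Equiv.Perm (ZMod (p ^ L)), inferInstance, inferInstance, affineRep _ u hu, ?_⟩
  rw [orderOf_affineRep_a]
  exact ZMod.pow_dvd_addOrderOf_intCast (vertexLabel_ne_zero hn hm i) l

theorem padicValNat_orderOf_map_a_tsub [NeZero s] (hn : ∀ i, n i ≠ 0) (hm : ∀ i, m i ≠ 0)
    (p : ℕ) [Fact p.Prime] {G : Type*} [Group G] [Finite G] (φ : GBSCycle s n m →* G)
    (j : Fin s) :
    padicValNat p (orderOf (φ (a s n m j))) - padicValInt p (n j) =
      padicValNat p (orderOf (φ (a s n m (j + 1)))) - padicValInt p (m j) := by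
  have := congrArg (padicValNat p) (φ.map_isConj (isConj_a_zpow j)).orderOf_eq
  rwa [map_zpow, map_zpow, padicValNat_orderOf_zpow p (orderOf_pos (φ (a s n m j))).ne' (hn j),
    padicValNat_orderOf_zpow p (orderOf_pos (φ (a s n m (j + 1)))).ne' (hm j)] at this

theorem not_dvd_orderOf_map_a [NeZero s] (hn : ∀ i, n i ≠ 0) (hm : ∀ i, m i ≠ 0)
    {p : ℕ} [Fact p.Prime] (hpnm : ¬ ((p : ℤ) ∣ ∏ j, n j ↔ (p : ℤ) ∣ ∏ j, m j))
    {G : Type*} [Group G] [Finite G] (φ : GBSCycle s n m →* G) (i : Fin s) :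
    ¬ p ∣ orderOf (φ (a s n m i)) := by
  set e := fun j => padicValNat p (orderOf (φ (a s n m j)))
  have hrec : ∀ j, e j - padicValInt p (n j) = e (j + 1) - padicValInt p (m j) :=
    padicValNat_orderOf_map_a_tsub hn hm p φ
  suffices e i = 0 from
    fun hdvd => (dvd_iff_padicValNat_ne_zero (orderOf_pos _).ne').mp hdvd this
  by_cases hN : (p : ℤ) ∣ ∏ j, n j
  · obtain ⟨j₀, hj₀⟩ := exists_padicValInt_ne_zero_of_dvd_prod hn hN
    have hM := padicValInt_eq_zero_of_not_dvd_prod fun hM => hpnm (iff_of_true hN hM)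
    exact Fin.eq_zero_of_forall_apply_add_one_eq_tsub (e := e)
      (fun j => by simpa [hM] using (hrec j).symm) hj₀ i
  · obtain ⟨j₀, hj₀⟩ := exists_padicValInt_ne_zero_of_dvd_prod hm
      (Classical.byContradiction fun hM => hpnm (iff_of_false hN hM))
    have hN := padicValInt_eq_zero_of_not_dvd_prod hN
    exact Fin.eq_zero_of_forall_apply_eq_apply_add_one_tsub (e := e)
      (fun j => by simpa [hN] using hrec j) hj₀ i

end GBSCycle

/-- Finite-quotient content of the paper's Proposition 3.2 (Closure): if the augmentation
products of the cycle are isocratic, then on each vertex group `⟨a_i⟩` the group `Γ`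
induces exactly the full pro-`I(n(Ξ),m(Ξ))` topology: (i) primes `p` with
`ν_p(n(Ξ)) = ν_p(m(Ξ))` appear with arbitrarily large powers in orders of images of `a_i`
in finite quotients, and (ii) primes with `ν_p(n(Ξ)) ≠ ν_p(m(Ξ))` never divide such orders. -/
theorem GBSCycle_vertex_group_closure
    (s : ℕ) (hs : 0 < s) (n m : Fin s → ℤ)
    (hn : ∀ i, n i ≠ 0) (hm : ∀ i, m i ≠ 0)
    (hiso : Isocratic (∏ j, n j) (∏ j, m j))
    (i : Fin s) :
    (∀ p : ℕ, p.Prime →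
      padicValNat p (∏ j, n j).natAbs = padicValNat p (∏ j, m j).natAbs →
      ∀ l : ℕ, ∃ (Q : Type) (_ : Group Q) (_ : Finite Q) (φ : GBSCycle s n m →* Q),
        p ^ l ∣ orderOf (φ (GBSCycle.a s n m i))) ∧
    (∀ p : ℕ, p.Prime →
      padicValNat p (∏ j, n j).natAbs ≠ padicValNat p (∏ j, m j).natAbs →
      ∀ (Q : Type) (_ : Group Q) (_ : Finite Q) (φ : GBSCycle s n m →* Q),
        ¬ p ∣ orderOf (φ (GBSCycle.a s n m i))) := by
  have : NeZero s := ⟨hs.ne'⟩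
  refine ⟨fun p hp hv l => ?_, fun p hp hv Q _ _ φ => ?_⟩
  · have := Fact.mk hp
    exact GBSCycle.exists_pow_dvd_orderOf_map_a hn hm hv i l
  · have := Fact.mk hp
    refine GBSCycle.not_dvd_orderOf_map_a hn hm (fun hiff => hv ?_) φ i
    by_cases hN : (p : ℤ) ∣ ∏ j, n j
    · exact hiso p hp hN (hiff.mp hN)
    · exact (padicValInt.eq_zero_of_not_dvd hN).trans
        (padicValInt.eq_zero_of_not_dvd (hiff.not.mp hN)).symm
end
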